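/- There exists a bijection from the positive integers onto the set of all binary partitions of all nonnegative integers (including the empty partition) such that each term of the sequence is obtained from the previous one either by an elementary move or by adding a single new part equal to 1. -/

import Mathlib

/-- A binary partition: a multiset of parts, each a power of two. -/
def IsBinaryPartition (P : Multiset ℕ) : Prop := ∀ p ∈ P, ∃ k : ℕ, p = 2 ^ k

/-- `P` and `Q` differ by an elementary move: for some `k`, `Q` is obtained from `P`
by removing two copies of `2^k` and adding one copy of `2^(k+1)`, or vice versa. -/
def ElementaryMove (P Q : Multiset ℕ) : Prop :=
  ∃ k : ℕ, Q + {2 ^ k, 2 ^ k} = P + {2 ^ (k + 1)} ∨ P + {2 ^ k, 2 ^ k} = Q + {2 ^ (k + 1)}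

/-!
The binary partitions of `n` containing a `1` are those of `n - 1` with a `1` added; the others
(for even `n`) are the doubles of those of `n / 2`. Listing the first kind in the reverse of the
order for `n - 1` and then the second kind in the order for `n / 2` yields, recursively, a list
of the partitions of `n` in which neighbours differ by an elementary move, also at the seam
(`2P + 1 + 1` versus `2(P + 1)`), and which starts with the last partition of `n - 1` plus a `1`.
Concatenating these lists over all `n` gives the sequence.
-/

open Function

section ConcatSeq

variable {α : Type*} (f : ℕ → List α)

def concatUpTo (N : ℕ) : List α := (List.range N).flatMap f

variable {f}

theorem concatUpTo_succ (N : ℕ) : concatUpTo f (N + 1) = concatUpTo f N ++ f N := by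
  simp [concatUpTo, List.range_succ]

theorem concatUpTo_prefix {M N : ℕ} (h : M ≤ N) : concatUpTo f M <+: concatUpTo f N := by
  have : List.range M <+: List.range N := by
    simpa [min_eq_left h] using List.take_prefix M (List.range N)
  exact this.flatMap f

theorem le_length_concatUpTo (hf : ∀ n, f n ≠ []) (N : ℕ) : N ≤ (concatUpTo f N).length := by
  induction N with
  | zero => simp
  | succ N ih =>
    rw [concatUpTo_succ, List.length_append]
    have := List.length_pos_iff.mpr (hf N)
    omega

theorem nodup_concatUpTo (hnd : ∀ n, (f n).Nodup) (hdisj : Pairwise (List.Disjoint on f))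
    (N : ℕ) : (concatUpTo f N).Nodup :=
  List.nodup_flatMap.mpr ⟨fun n _ => hnd n, List.pairwise_lt_range.imp fun h => hdisj h.ne⟩

theorem isChain_concatUpTo {R : α → α → Prop} (hf : ∀ n, f n ≠ [])
    (hc : ∀ n, List.IsChain R (f n))
    (hj : ∀ n, ∀ x ∈ (f n).getLast?, ∀ y ∈ (f (n + 1)).head?, R x y) (N : ℕ) :
    List.IsChain R (concatUpTo f N) := by
  induction N with
  | zero => simp [concatUpTo]
  | succ N ih =>
    rw [concatUpTo_succ, List.isChain_append]
    refine ⟨ih, hc N, fun x hx y hy => ?_⟩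
    cases N with
    | zero => simp [concatUpTo] at hx
    | succ N =>
      rw [concatUpTo_succ, List.getLast?_append] at hx
      exact hj N x (by simpa [List.getLast?_eq_some_getLast (hf N)] using hx) y hy

variable [Inhabited α]

/-- The `i`-th entry of `f 0 ++ f 1 ++ ⋯`: once every block is nonempty, the first `i + 1`
blocks reach index `i` (otherwise `getI` returns `default`). -/
def concatSeq (f : ℕ → List α) (i : ℕ) : α := (concatUpTo f (i + 1)).getI i

theorem concatSeq_eq_getElem (hf : ∀ n, f n ≠ []) {N i : ℕ}
    (hi : i < (concatUpTo f N).length) : concatSeq f i = (concatUpTo f N)[i] := by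
  have hi' : i < (concatUpTo f (i + 1)).length := le_length_concatUpTo hf (i + 1)
  rw [concatSeq, List.getI_eq_getElem _ hi']
  rcases le_total (i + 1) N with h | h
  · exact (concatUpTo_prefix h).getElem hi'
  · exact ((concatUpTo_prefix h).getElem hi).symm

theorem concatSeq_injective (hf : ∀ n, f n ≠ []) (hnd : ∀ n, (f n).Nodup)
    (hdisj : Pairwise (List.Disjoint on f)) : Injective (concatSeq f) := by
  intro i j hij
  have hlen := le_length_concatUpTo hf (max i j + 1)
  rw [concatSeq_eq_getElem hf (N := max i j + 1) (by omega),
    concatSeq_eq_getElem hf (N := max i j + 1) (by omega)] at hij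
  exact (nodup_concatUpTo hnd hdisj _).getElem_inj_iff.mp hij

theorem concatSeq_rel_succ {R : α → α → Prop} (hf : ∀ n, f n ≠ []) (hc : ∀ n, List.IsChain R (f n))
    (hj : ∀ n, ∀ x ∈ (f n).getLast?, ∀ y ∈ (f (n + 1)).head?, R x y) (i : ℕ) :
    R (concatSeq f i) (concatSeq f (i + 1)) := by
  have hlen := le_length_concatUpTo hf (i + 2)
  rw [concatSeq_eq_getElem hf (N := i + 2) (by omega), concatSeq_eq_getElem hf (N := i + 2) hlen]
  exact List.isChain_iff_getElem.mp (isChain_concatUpTo hf hc hj (i + 2)) i hlen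

theorem exists_concatSeq_mem (hf : ∀ n, f n ≠ []) (i : ℕ) : ∃ n, concatSeq f i ∈ f n := by
  have hi : i < (concatUpTo f (i + 1)).length := le_length_concatUpTo hf (i + 1)
  rw [concatSeq_eq_getElem hf hi]
  obtain ⟨n, -, hn⟩ := List.mem_flatMap.mp (List.getElem_mem hi)
  exact ⟨n, hn⟩

theorem exists_concatSeq_eq (hf : ∀ n, f n ≠ []) {n : ℕ} {x : α} (hx : x ∈ f n) :
    ∃ i, concatSeq f i = x := by
  have hmem : x ∈ concatUpTo f (n + 1) := by
    rw [concatUpTo_succ]; exact List.mem_append_right _ hx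
  obtain ⟨i, hi, rfl⟩ := List.mem_iff_getElem.mp hmem
  exact ⟨i, concatSeq_eq_getElem hf hi⟩

end ConcatSeq

theorem isBinaryPartition_add_singleton_one {P : Multiset ℕ} :
    IsBinaryPartition (P + {1}) ↔ IsBinaryPartition P := by
  simp only [IsBinaryPartition, Multiset.mem_add, Multiset.mem_singleton, or_imp, forall_and,
    forall_eq, and_iff_left_iff_imp]
  exact fun _ => ⟨0, rfl⟩

theorem isBinaryPartition_map_two_mul {P : Multiset ℕ} :
    IsBinaryPartition (P.map (2 * ·)) ↔ IsBinaryPartition P := by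
  simp only [IsBinaryPartition, Multiset.forall_mem_map_iff]
  refine forall₂_congr fun p _ => ⟨fun ⟨k, hk⟩ => ?_, fun ⟨k, hk⟩ => ⟨k + 1, by rw [hk, pow_succ']⟩⟩
  cases k with
  | zero => omega
  | succ k => exact ⟨k, by rw [pow_succ'] at hk; omega⟩

theorem IsBinaryPartition.eq_zero_of_sum_eq_zero {P : Multiset ℕ} (hP : IsBinaryPartition P)
    (h : P.sum = 0) : P = 0 :=
  Multiset.eq_zero_of_forall_notMem fun p hp => by
    obtain ⟨k, rfl⟩ := hP p hp
    exact pow_ne_zero k two_ne_zero (Multiset.sum_eq_zero_iff.mp h _ hp)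

theorem IsBinaryPartition.exists_eq_map_two_mul {P : Multiset ℕ} (hP : IsBinaryPartition P)
    (h1 : 1 ∉ P) : ∃ Q : Multiset ℕ, P = Q.map (2 * ·) := by
  refine ⟨P.map (· / 2), ?_⟩
  rw [Multiset.map_map]
  conv_lhs => rw [← Multiset.map_id P]
  refine Multiset.map_congr rfl fun p hp => ?_
  obtain ⟨k, rfl⟩ := hP p hp
  cases k with
  | zero => exact absurd hp h1
  | succ k => simp [pow_succ']

theorem ElementaryMove.symm {P Q : Multiset ℕ} (h : ElementaryMove P Q) : ElementaryMove Q P :=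
  let ⟨k, hk⟩ := h; ⟨k, hk.symm⟩

theorem ElementaryMove.add_right {P Q : Multiset ℕ} (h : ElementaryMove P Q) (R : Multiset ℕ) :
    ElementaryMove (P + R) (Q + R) := by
  obtain ⟨k, h | h⟩ := h
  · exact ⟨k, Or.inl (by rw [add_right_comm, h, add_right_comm])⟩
  · exact ⟨k, Or.inr (by rw [add_right_comm, h, add_right_comm])⟩

theorem ElementaryMove.map_two_mul {P Q : Multiset ℕ} (h : ElementaryMove P Q) :
    ElementaryMove (P.map (2 * ·)) (Q.map (2 * ·)) := by
  have two_mul_pow (j : ℕ) : 2 * 2 ^ j = 2 ^ (j + 1) := (pow_succ' 2 j).symm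
  have map_eq {A B : Multiset ℕ} {k : ℕ} (h : A + {2 ^ k, 2 ^ k} = B + {2 ^ (k + 1)}) :
      A.map (2 * ·) + {2 ^ (k + 1), 2 ^ (k + 1)} = B.map (2 * ·) + {2 ^ (k + 1 + 1)} := by
    have := congrArg (Multiset.map (2 * ·)) h
    simp only [Multiset.map_add, Multiset.insert_eq_cons, Multiset.map_cons,
      Multiset.map_singleton] at this
    rwa [two_mul_pow, two_mul_pow] at this
  obtain ⟨k, h | h⟩ := h
  exacts [⟨k + 1, Or.inl (map_eq h)⟩, ⟨k + 1, Or.inr (map_eq h)⟩]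

theorem elementaryMove_add_one_add_one (P : Multiset ℕ) :
    ElementaryMove (P + {1} + {1}) (P + {2}) :=
  ⟨0, Or.inl (by simp only [pow_zero, zero_add, pow_one, Multiset.insert_eq_cons]; abel)⟩

def grayList : ℕ → List (Multiset ℕ)
  | 0 => [0]
  | n + 1 => (grayList n).reverse.map (· + {1}) ++
      if n % 2 = 1 then (grayList ((n + 1) / 2)).map (Multiset.map (2 * ·)) else []

theorem grayList_succ_of_even {n : ℕ} (h : n % 2 = 0) :
    grayList (n + 1) = (grayList n).reverse.map (· + {1}) := by
  rw [grayList, if_neg (by omega), List.append_nil]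

theorem grayList_succ_of_odd {n : ℕ} (h : n % 2 = 1) :
    grayList (n + 1) = (grayList n).reverse.map (· + {1}) ++
      (grayList ((n + 1) / 2)).map (Multiset.map (2 * ·)) := by
  rw [grayList, if_pos h]

theorem grayList_ne_nil : ∀ n, grayList n ≠ []
  | 0 => by simp [grayList]
  | n + 1 => by simp [grayList, grayList_ne_nil n]

theorem mem_grayList_succ {n : ℕ} {P : Multiset ℕ} :
    P ∈ grayList (n + 1) ↔ (∃ Q ∈ grayList n, P = Q + {1}) ∨
      (n % 2 = 1 ∧ ∃ Q ∈ grayList ((n + 1) / 2), P = Q.map (2 * ·)) := by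
  rw [grayList]
  split_ifs with h <;> simp [h, eq_comm]

theorem mem_grayList_iff {n : ℕ} {P : Multiset ℕ} :
    P ∈ grayList n ↔ IsBinaryPartition P ∧ P.sum = n := by
  induction n using Nat.strong_induction_on generalizing P with | _ n ih => ?_
  cases n with
  | zero =>
    simp only [grayList, List.mem_singleton]
    refine ⟨fun h => by simp [h, IsBinaryPartition], fun ⟨hP, h⟩ => hP.eq_zero_of_sum_eq_zero h⟩
  | succ n =>
    rw [mem_grayList_succ]
    constructor
    · rintro (⟨Q, hQ, rfl⟩ | ⟨hn, Q, hQ, rfl⟩)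
      · obtain ⟨hb, rfl⟩ := (ih n n.lt_succ_self).mp hQ
        exact ⟨isBinaryPartition_add_singleton_one.mpr hb, by simp⟩
      · obtain ⟨hb, hs⟩ := (ih _ (by omega)).mp hQ
        refine ⟨isBinaryPartition_map_two_mul.mpr hb, ?_⟩
        rw [Multiset.sum_map_mul_left, Multiset.map_id', hs]
        omega
    · rintro ⟨hP, hs⟩
      by_cases h1 : 1 ∈ P
      · have hP' : P = P.erase 1 + {1} := by
          rw [add_comm, Multiset.singleton_add, Multiset.cons_erase h1]
        rw [hP', isBinaryPartition_add_singleton_one] at hP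
        rw [hP', Multiset.sum_add, Multiset.sum_singleton] at hs
        exact Or.inl ⟨_, (ih n n.lt_succ_self).mpr ⟨hP, by omega⟩, hP'⟩
      · obtain ⟨Q, rfl⟩ := hP.exists_eq_map_two_mul h1
        rw [isBinaryPartition_map_two_mul] at hP
        rw [Multiset.sum_map_mul_left, Multiset.map_id'] at hs
        exact Or.inr ⟨by omega, Q, (ih _ (by omega)).mpr ⟨hP, by omega⟩, rfl⟩

theorem nodup_grayList : ∀ n, (grayList n).Nodup
  | 0 => by simp [grayList]
  | n + 1 => by
    have add_one_inj : Injective (· + ({1} : Multiset ℕ)) := add_left_injective _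
    have two_mul_inj : Injective (Multiset.map (2 * · : ℕ → ℕ)) :=
      Multiset.map_injective (mul_right_injective₀ two_ne_zero)
    rw [grayList]
    refine ((List.nodup_reverse.mpr (nodup_grayList n)).map add_one_inj).append ?_ ?_
    · split_ifs
      exacts [(nodup_grayList _).map two_mul_inj, List.nodup_nil]
    · -- partitions in the first block contain a `1`, doubled ones do not
      rw [List.disjoint_left]
      simp only [List.mem_map, List.mem_reverse]
      rintro _ ⟨Q, -, rfl⟩ h
      split_ifs at h
      · obtain ⟨R, -, hR⟩ := List.mem_map.mp h
        have : 1 ∈ R.map (2 * ·) := by simp [hR]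
        simp at this
      · simp at h

theorem head?_grayList_succ (n : ℕ) :
    (grayList (n + 1)).head? = (grayList n).getLast?.map (· + {1}) := by
  rw [grayList, List.head?_append, List.head?_map, List.head?_reverse,
    List.getLast?_eq_some_getLast (grayList_ne_nil n)]
  rfl

theorem getLast?_grayList_two_mul : ∀ m : ℕ,
    (grayList (2 * m)).getLast? = (grayList m).getLast?.map (Multiset.map (2 * ·))
  | 0 => by simp [grayList]
  | m + 1 => by
    rw [show 2 * (m + 1) = 2 * m + 1 + 1 by ring, grayList_succ_of_odd (by omega),
      List.getLast?_append, List.getLast?_map, show (2 * m + 1 + 1) / 2 = m + 1 by omega,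
      List.getLast?_eq_some_getLast (grayList_ne_nil _)]
    rfl

theorem isChain_grayList : ∀ n, (grayList n).IsChain ElementaryMove
  | 0 => by simp [grayList]
  | n + 1 => by
    have first_block : ((grayList n).reverse.map (· + {1})).IsChain ElementaryMove := by
      rw [List.isChain_map, List.isChain_reverse]
      exact (isChain_grayList n).imp fun _ _ h => (ElementaryMove.symm h).add_right _
    rcases Nat.even_or_odd' n with ⟨m, rfl | rfl⟩
    · rwa [grayList_succ_of_even (by omega)]
    rw [grayList_succ_of_odd (by omega), List.isChain_append]
    refine ⟨first_block,
      (List.isChain_map _).mpr ((isChain_grayList _).imp fun _ _ => ElementaryMove.map_two_mul), ?_⟩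
    -- both ends come from the last partition `P` of `m`: `2P + 1 + 1` and `2(P + 1)`
    rw [List.getLast?_map, List.getLast?_reverse, head?_grayList_succ, getLast?_grayList_two_mul,
      List.head?_map, show (2 * m + 1 + 1) / 2 = m + 1 by omega, head?_grayList_succ]
    simp only [Option.map_map, Option.mem_def, Option.map_eq_some_iff]
    rintro _ ⟨P, hP, rfl⟩ _ ⟨Q, hQ, rfl⟩
    obtain rfl : P = Q := Option.some_injective _ (hP.symm.trans hQ)
    simpa [comp_def] using elementaryMove_add_one_add_one (P.map (2 * ·))

theorem gray_sequence_all_binary_partitions :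
    ∃ B : ℕ+ → Multiset ℕ,
      (∀ k, IsBinaryPartition (B k)) ∧
      Function.Injective B ∧
      (∀ P : Multiset ℕ, IsBinaryPartition P → ∃ k, B k = P) ∧
      (∀ k, ElementaryMove (B k) (B (k + 1)) ∨ B (k + 1) = B k + {1}) := by
  have disjoint : Pairwise (List.Disjoint on grayList) := fun m n hmn P hm hn =>
    hmn ((mem_grayList_iff.mp hm).2.symm.trans (mem_grayList_iff.mp hn).2)
  refine ⟨fun k => concatSeq grayList k.natPred, fun k => ?_, ?_, fun P hP => ?_, fun k => ?_⟩
  · obtain ⟨n, hn⟩ := exists_concatSeq_mem grayList_ne_nil k.natPred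
    exact (mem_grayList_iff.mp hn).1
  · exact (concatSeq_injective grayList_ne_nil nodup_grayList disjoint).comp PNat.natPred_injective
  · obtain ⟨i, hi⟩ := exists_concatSeq_eq grayList_ne_nil (mem_grayList_iff.mpr ⟨hP, rfl⟩)
    exact ⟨i.succPNat, by simpa using hi⟩
  · have step := concatSeq_rel_succ (R := fun P Q => ElementaryMove P Q ∨ Q = P + {1})
      grayList_ne_nil (fun n => (isChain_grayList n).imp fun _ _ => Or.inl)
      (fun n P hP Q hQ => Or.inr ?_) k.natPred
    · have natPred_succ : (k + 1).natPred = k.natPred + 1 := by rw [PNat.natPred_add_one]; rfl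
      dsimp only
      rwa [natPred_succ]
    · rw [head?_grayList_succ, Option.mem_def.mp hP] at hQ
      simpa using hQ.symm
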